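/- Over an alphabet Σ = {σ₁, …, σₖ}, the string α = (σ₁σ₂⋯σₖ)^ω is a greatest element under quasi-isometric reducibility: for every string β ∈ Σ^ω there exists a quasi-isometry from β to α. -/

import Mathlib

/-! Send position `n` of `β` to the `n`-th block of `(σ₁⋯σₖ)^ω`, at the letter `β n`, i.e.
`f n = n k + β n`. This map scales distances by `k` up to an additive error `k - 1`, and every
position `m` of the target lies in the block of `f (m / k)`. -/

def IsQI {Γ : Type*} (α β : ℕ → Γ) (f : ℕ → ℕ) (A B : ℝ) : Prop :=
  1 ≤ A ∧ 0 ≤ B ∧ (∀ n, α n = β (f n)) ∧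
  (∀ x y : ℕ, (1 / A) * |(x : ℝ) - (y : ℝ)| - B ≤ |(f x : ℝ) - (f y : ℝ)| ∧
      |(f x : ℝ) - (f y : ℝ)| ≤ A * |(x : ℝ) - (y : ℝ)| + B) ∧
  (∀ m : ℕ, ∃ x : ℕ, |(m : ℝ) - (f x : ℝ)| ≤ A)

/-- `α ≤_QI β`: there is a quasi-isometry from `α` to `β`. -/
def QI {Γ : Type*} (α β : ℕ → Γ) : Prop := ∃ f A B, IsQI α β f A B

lemma isQI_of_abs_abs_sub_mul_le {Γ : Type*} {α β : ℕ → Γ} {f : ℕ → ℕ} {A B : ℝ}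
    (hA : 1 ≤ A) (hcolour : ∀ n, α n = β (f n))
    (hdist : ∀ x y : ℕ, |(|(f x : ℝ) - f y| - A * |(x : ℝ) - y|)| ≤ B)
    (hcobounded : ∀ m : ℕ, ∃ x, |(m : ℝ) - f x| ≤ A) :
    IsQI α β f A B := by
  refine ⟨hA, (abs_nonneg _).trans (hdist 0 0), hcolour, fun x y => ?_, hcobounded⟩
  obtain ⟨hlower, hupper⟩ := abs_le.mp (hdist x y)
  have hinv : 1 / A * |(x : ℝ) - y| ≤ A * |(x : ℝ) - y| :=
    mul_le_mul_of_nonneg_right (by rw [div_le_iff₀ (by linarith)]; nlinarith) (abs_nonneg _)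
  constructor <;> linarith

section BlockEmbedding

variable {k : ℕ} {r : ℕ → ℕ}

lemma abs_abs_sub_mul_block_le (hr : ∀ n, r n < k) (x y : ℕ) :
    |(|((x * k + r x : ℕ) : ℝ) - (y * k + r y : ℕ)| - k * |(x : ℝ) - y|)| ≤ k - 1 := by
  have hr_le : ∀ n, (r n : ℝ) ≤ k - 1 := fun n => by
    have : (r n : ℝ) + 1 ≤ k := by exact_mod_cast hr n
    linarith
  calc |(|((x * k + r x : ℕ) : ℝ) - (y * k + r y : ℕ)| - k * |(x : ℝ) - y|)|
      = |(|((x * k + r x : ℕ) : ℝ) - (y * k + r y : ℕ)| - |k * ((x : ℝ) - y)|)| := by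
        rw [abs_mul, Nat.abs_cast]
    _ ≤ |((x * k + r x : ℕ) : ℝ) - (y * k + r y : ℕ) - k * ((x : ℝ) - y)| :=
        abs_abs_sub_abs_le_abs_sub _ _
    _ = |(r x : ℝ) - r y| := by push_cast; ring_nf
    _ ≤ k - 1 :=
        abs_sub_le_of_nonneg_of_le (Nat.cast_nonneg _) (hr_le x) (Nat.cast_nonneg _) (hr_le y)

lemma abs_sub_block_div_le (hr : ∀ n, r n < k) (m : ℕ) :
    |(m : ℝ) - ((m / k * k + r (m / k) : ℕ) : ℝ)| ≤ k - 1 := by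
  have hk : 0 < k := (Nat.zero_le _).trans_lt (hr 0)
  set q := m / k
  have hm : m < q * k + k := by
    have : q * k + m % k = m := Nat.div_add_mod' m k
    have := Nat.mod_lt m hk
    omega
  have h₁ : (m : ℝ) + 1 ≤ q * k + k := by exact_mod_cast hm
  have h₂ : (q : ℝ) * k ≤ m := by exact_mod_cast Nat.div_mul_le_self m k
  have h₃ : (r q : ℝ) + 1 ≤ k := by exact_mod_cast hr q
  push_cast
  rw [abs_le]
  constructor <;> linarith [(Nat.cast_nonneg (r q) : (0 : ℝ) ≤ _)]

end BlockEmbedding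

theorem cyclic_string_is_greatest (k : ℕ) (hk : 2 ≤ k) (β : ℕ → Fin k) :
    QI β (fun i => (⟨i % k, Nat.mod_lt i (by omega)⟩ : Fin k)) := by
  have hr : ∀ n, (β n : ℕ) < k := fun n => (β n).isLt
  have hk₁ : (1 : ℝ) ≤ k := by exact_mod_cast (by omega : 1 ≤ k)
  refine ⟨fun n => n * k + β n, k, k - 1,
    isQI_of_abs_abs_sub_mul_le hk₁ (fun n => ?_) (abs_abs_sub_mul_block_le hr)
      (fun m => ⟨m / k, (abs_sub_block_div_le hr m).trans (by linarith)⟩)⟩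
  ext
  simp [Nat.mul_add_mod_of_lt (hr n)]
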